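/- Let E ∈ M(J, {n_k}, {c_k}) be a Moran set with lim_{k→∞} (log c_k)/(log(c_1⋯c_k)) = 0. Then for every δ ∈ (0,1), h_E(δ) ≥ limsup_{q→∞} max_{1 ≤ p ≤ l_{q,δ}} (log(n_p⋯n_q))/(−log(c_p⋯c_q)), where l_{q,δ} = max{1 ≤ p ≤ q : (log(c_p⋯c_q))/(log(c_1⋯c_q)) > δ}. -/

import Mathlib

open Filter Topology Metric Set

/-- `coverNum X r R` : the smallest number of closed balls of radius `r` needed to cover
`X ∩ B` over all closed balls `B` of radius `R`. -/
noncomputable def coverNum (X : Type*) [MetricSpace X] (r R : ℝ) : ℕ :=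
  sSup {n : ℕ | ∃ x : X, n = sInf {m : ℕ | ∃ s : Finset X,
    s.card = m ∧ Metric.closedBall x R ⊆ ⋃ y ∈ s, Metric.closedBall y r}}

/-- `hFun X δ = inf {α ≥ 0 : ∃ b, c > 0, N_{r,R}(X) ≤ c (R/r)^α for all 0 < r < r^(1-δ) ≤ R < b}`. -/
noncomputable def hFun (X : Type*) [MetricSpace X] (δ : ℝ) : ℝ :=
  sInf {α : ℝ | 0 ≤ α ∧ ∃ b c : ℝ, 0 < b ∧ 0 < c ∧ ∀ r R : ℝ,
    0 < r → r < r ^ (1 - δ) → r ^ (1 - δ) ≤ R → R < b →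
      (coverNum X r R : ℝ) ≤ c * (R / r) ^ α}

/-- The quasi-Assouad dimension `dim_qA X = lim_{δ → 0⁺} h_X(δ)`; since `h_X` is
non-increasing in `δ`, this limit equals the supremum over `δ ∈ (0,1)`. -/
noncomputable def dimqA (X : Type*) [MetricSpace X] : ℝ :=
  sSup (hFun X '' Set.Ioo 0 1)

/-- A word `i₁ ⋯ i_k` (as a list, head = `i₁`) is admissible for the branching numbers `n`
if `1 ≤ i_t ≤ n t` for every `t`. -/
def MoranAdmissible (n : ℕ → ℕ) (w : List ℕ) : Prop :=
  ∀ t : ℕ, t < w.length → 1 ≤ w.getD t 0 ∧ w.getD t 0 ≤ n (t + 1)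

/-- `F ∈ M(J, {n_k}, {c_k})` : `F` is a Moran set with initial closed interval `J`,
branching numbers `n_k` and contraction ratios `c_k` (indices start at `1`). -/
def IsMoranSet (J : Set ℝ) (n : ℕ → ℕ) (c : ℕ → ℝ) (F : Set ℝ) : Prop :=
  ∃ A B : ℝ, A < B ∧ J = Set.Icc A B ∧
  ∃ a b : List ℕ → ℝ,
    a [] = A ∧ b [] = B ∧
    (∀ w : List ℕ, MoranAdmissible n w → ∀ j : ℕ, 1 ≤ j → j ≤ n (w.length + 1) →
      a w ≤ a (w ++ [j]) ∧ a (w ++ [j]) < b (w ++ [j]) ∧ b (w ++ [j]) ≤ b w ∧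
      b (w ++ [j]) - a (w ++ [j]) = c (w.length + 1) * (b w - a w)) ∧
    (∀ w : List ℕ, MoranAdmissible n w → ∀ j j' : ℕ, 1 ≤ j → j ≤ n (w.length + 1) →
      1 ≤ j' → j' ≤ n (w.length + 1) → j ≠ j' →
      interior (Set.Icc (a (w ++ [j])) (b (w ++ [j]))) ∩
        interior (Set.Icc (a (w ++ [j'])) (b (w ++ [j']))) = ∅) ∧
    F = ⋂ k : ℕ, ⋃ w ∈ {w : List ℕ | MoranAdmissible n w ∧ w.length = k},
      Set.Icc (a w) (b w)

/-- `s_{p,q} = log (n_p ⋯ n_q) / (- log (c_p ⋯ c_q))`. -/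
noncomputable def spq (n : ℕ → ℕ) (c : ℕ → ℝ) (p q : ℕ) : ℝ :=
  Real.log (∏ i ∈ Finset.Icc p q, (n i : ℝ)) / (-Real.log (∏ i ∈ Finset.Icc p q, c i))

/-- `l_{q,δ} = max {1 ≤ p ≤ q : log (c_p ⋯ c_q) / log (c_1 ⋯ c_q) > δ}`. -/
noncomputable def lIdx (c : ℕ → ℝ) (δ : ℝ) (q : ℕ) : ℕ :=
  sSup {p : ℕ | 1 ≤ p ∧ p ≤ q ∧
    δ < Real.log (∏ i ∈ Finset.Icc p q, c i) / Real.log (∏ i ∈ Finset.Icc 1 q, c i)}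

/-! Fix `1 ≤ p ≤ l_{q,δ}`, let `r` be the length of the level-`q` basic intervals and `R` that of
the level-`(p-1)` ones, enlarged to `r^(1-δ)` if necessary; by the choice of `l_{q,δ}` this costs
only an additive constant in `log (R/r) ≤ -log (c_p ⋯ c_q) + O(1)`. A level-`(p-1)` interval has
`n_p ⋯ n_q` level-`q` descendants, each containing a point of `E`, and a ball of radius `r` meets
at most four of them, so `n_p ⋯ n_q ≤ 4 N_{r,R}(E) ≤ 4 C (R/r)^α`. Taking logarithms,
`log (n_p ⋯ n_q) ≤ α (-log (c_p ⋯ c_q)) + O(1)`, and `-log (c_p ⋯ c_q) > δ (-log (c_1 ⋯ c_q)) → ∞`.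
To keep `R` below the threshold `b`, the levels below a fixed `k` are cut off; since
`log n_i ≤ -log c_i`, they only contribute another `O(1)`. -/

namespace MoranAdmissible

variable {n : ℕ → ℕ} {w u : List ℕ} {j : ℕ}

theorem nil (n : ℕ → ℕ) : MoranAdmissible n [] := fun _ ht => absurd ht (Nat.not_lt_zero _)

theorem of_isPrefix (h : w <+: u) (hu : MoranAdmissible n u) : MoranAdmissible n w := by
  obtain ⟨v, rfl⟩ := h
  intro t ht
  have := hu t (by simp; omega)
  rwa [List.getD_append _ _ _ _ ht] at this

theorem append_singleton_iff :
    MoranAdmissible n (w ++ [j]) ↔ MoranAdmissible n w ∧ 1 ≤ j ∧ j ≤ n (w.length + 1) := by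
  refine ⟨fun h => ⟨h.of_isPrefix (List.prefix_append _ _), by simpa using h w.length (by simp)⟩,
    fun ⟨hw, hj⟩ t ht => ?_⟩
  rcases (show t < w.length ∨ t = w.length by simp at ht; omega) with ht | rfl
  · rw [List.getD_append _ _ _ _ ht]; exact hw t ht
  · simpa using hj

theorem append_replicate_one (hn : ∀ k, 1 ≤ k → 1 ≤ n k) (hw : MoranAdmissible n w) (m : ℕ) :
    MoranAdmissible n (w ++ List.replicate m 1) := by
  induction m with
  | zero => simpa using hw
  | succ m ih =>
    rw [List.replicate_succ', ← List.append_assoc]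
    exact append_singleton_iff.2 ⟨ih, le_rfl, hn _ (Nat.succ_pos _)⟩

end MoranAdmissible

/-- The data of `IsMoranSet`, with `[left w, right w]` the basic interval `J_w`. -/
structure MoranConstruction (n : ℕ → ℕ) (c : ℕ → ℝ) where
  left : List ℕ → ℝ
  right : List ℕ → ℝ
  left_nil_lt : left [] < right []
  subdivide : ∀ w : List ℕ, MoranAdmissible n w → ∀ j : ℕ, 1 ≤ j → j ≤ n (w.length + 1) →
    left w ≤ left (w ++ [j]) ∧ left (w ++ [j]) < right (w ++ [j]) ∧ right (w ++ [j]) ≤ right w ∧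
      right (w ++ [j]) - left (w ++ [j]) = c (w.length + 1) * (right w - left w)
  disjoint_Ioo : ∀ w : List ℕ, MoranAdmissible n w → ∀ j j' : ℕ, 1 ≤ j → j ≤ n (w.length + 1) →
    1 ≤ j' → j' ≤ n (w.length + 1) → j ≠ j' →
    Disjoint (Ioo (left (w ++ [j])) (right (w ++ [j]))) (Ioo (left (w ++ [j'])) (right (w ++ [j'])))

namespace MoranConstruction

variable {n : ℕ → ℕ} {c : ℕ → ℝ} (M : MoranConstruction n c)

def limitSet : Set ℝ :=
  ⋂ k : ℕ, ⋃ w ∈ {w : List ℕ | MoranAdmissible n w ∧ w.length = k}, Icc (M.left w) (M.right w)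

theorem _root_.IsMoranSet.exists_moranConstruction {J E : Set ℝ} (h : IsMoranSet J n c E) :
    ∃ M : MoranConstruction n c, E = M.limitSet := by
  obtain ⟨A, B, hAB, -, a, b, rfl, rfl, hsub, hdisj, rfl⟩ := h
  refine ⟨⟨a, b, hAB, hsub, fun w hw j j' hj hj' hj₁ hj₁' hne => ?_⟩, rfl⟩
  simpa [Set.disjoint_iff_inter_eq_empty] using hdisj w hw j j' hj hj' hj₁ hj₁' hne

def len (w : List ℕ) : ℝ := M.right w - M.left w

def levelLen (k : ℕ) : ℝ := M.len [] * ∏ i ∈ Finset.Icc 1 k, c i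

theorem len_eq_levelLen {w : List ℕ} (hw : MoranAdmissible n w) :
    M.len w = M.levelLen w.length := by
  induction w using List.reverseRecOn with
  | nil => simp [levelLen]
  | append_singleton v j ih =>
    obtain ⟨hv, hj⟩ := MoranAdmissible.append_singleton_iff.1 hw
    rw [len, (M.subdivide v hv j hj.1 hj.2).2.2.2, ← len, ih hv, levelLen, levelLen,
      List.length_append, List.length_singleton, Finset.prod_Icc_succ_top (by omega)]
    ring

theorem left_lt_right {w : List ℕ} (hw : MoranAdmissible n w) : M.left w < M.right w := by
  rcases w.eq_nil_or_concat' with rfl | ⟨v, j, rfl⟩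
  · exact M.left_nil_lt
  · obtain ⟨hv, hj⟩ := MoranAdmissible.append_singleton_iff.1 hw
    exact (M.subdivide v hv j hj.1 hj.2).2.1

theorem le_left_and_right_le_of_isPrefix {w u : List ℕ} (h : w <+: u) (hu : MoranAdmissible n u) :
    M.left w ≤ M.left u ∧ M.right u ≤ M.right w := by
  obtain ⟨v, rfl⟩ := h
  induction v using List.reverseRecOn with
  | nil => simp
  | append_singleton v j ih =>
    rw [← List.append_assoc] at hu ⊢
    obtain ⟨hv, hj⟩ := MoranAdmissible.append_singleton_iff.1 hu
    obtain ⟨h₁, -, h₃, -⟩ := M.subdivide _ hv j hj.1 hj.2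
    exact ⟨(ih hv).1.trans h₁, h₃.trans (ih hv).2⟩

theorem Icc_subset_Icc_of_isPrefix {w u : List ℕ} (h : w <+: u) (hu : MoranAdmissible n u) :
    Icc (M.left u) (M.right u) ⊆ Icc (M.left w) (M.right w) :=
  Icc_subset_Icc (M.le_left_and_right_le_of_isPrefix h hu).1
    (M.le_left_and_right_le_of_isPrefix h hu).2

theorem disjoint_Ioo_of_ne {w₁ w₂ : List ℕ} (h₁ : MoranAdmissible n w₁) (h₂ : MoranAdmissible n w₂)
    (hlen : w₁.length = w₂.length) (hne : w₁ ≠ w₂) :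
    Disjoint (Ioo (M.left w₁) (M.right w₁)) (Ioo (M.left w₂) (M.right w₂)) := by
  induction w₁ using List.reverseRecOn generalizing w₂ with
  | nil => exact absurd (List.length_eq_zero_iff.1 hlen.symm).symm hne
  | append_singleton v₁ j₁ ih =>
    rcases w₂.eq_nil_or_concat' with rfl | ⟨v₂, j₂, rfl⟩
    · simp at hlen
    obtain ⟨hv₁, hj₁⟩ := MoranAdmissible.append_singleton_iff.1 h₁
    obtain ⟨hv₂, hj₂⟩ := MoranAdmissible.append_singleton_iff.1 h₂
    have hvlen : v₁.length = v₂.length := by simpa using hlen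
    by_cases hv : v₁ = v₂
    · subst hv
      exact M.disjoint_Ioo v₁ hv₁ j₁ j₂ hj₁.1 hj₁.2 hj₂.1 hj₂.2 fun h => hne (by rw [h])
    · have hsub₁ := M.le_left_and_right_le_of_isPrefix (List.prefix_append v₁ [j₁]) h₁
      have hsub₂ := M.le_left_and_right_le_of_isPrefix (List.prefix_append v₂ [j₂]) h₂
      exact (ih hv₁ hv₂ hvlen hv).mono (Ioo_subset_Ioo hsub₁.1 hsub₁.2)
        (Ioo_subset_Ioo hsub₂.1 hsub₂.2)

theorem limitSet_subset : M.limitSet ⊆ Icc (M.left []) (M.right []) := by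
  intro x hx
  obtain ⟨w, ⟨-, hw⟩, hxw⟩ := mem_iUnion₂.1 (mem_iInter.1 hx 0)
  rwa [List.length_eq_zero_iff.1 hw] at hxw

/-- A point of the limit set in the basic interval of `w`, reached along the branch `w 1 1 1 ⋯`. -/
noncomputable def point (w : List ℕ) : ℝ := ⨆ m, M.left (w ++ List.replicate m 1)

theorem point_mem (hn : ∀ k, 1 ≤ k → 1 ≤ n k) {w : List ℕ} (hw : MoranAdmissible n w) :
    M.point w ∈ M.limitSet ∩ Icc (M.left w) (M.right w) := by
  set g : ℕ → List ℕ := fun m => w ++ List.replicate m 1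
  have hg : ∀ m, MoranAdmissible n (g m) := hw.append_replicate_one hn
  have hprefix : ∀ {m m'}, m ≤ m' → g m <+: g m' := fun {m m'} h =>
    ⟨List.replicate (m' - m) 1, by simp [g, Nat.add_sub_cancel' h]⟩
  have hbranch : M.point w ∈ ⋂ m, Icc (M.left (g m)) (M.right (g m)) :=
    Monotone.ciSup_mem_iInter_Icc_of_antitone
      (fun _ _ h => (M.le_left_and_right_le_of_isPrefix (hprefix h) (hg _)).1)
      (fun _ _ h => (M.le_left_and_right_le_of_isPrefix (hprefix h) (hg _)).2)
      fun m => (M.left_lt_right (hg m)).le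
  have hw_mem : M.point w ∈ Icc (M.left w) (M.right w) := by simpa [g] using mem_iInter.1 hbranch 0
  refine ⟨mem_iInter.2 fun k => ?_, hw_mem⟩
  rcases le_or_gt w.length k with hk | hk
  · refine mem_biUnion (x := g (k - w.length)) ⟨hg _, by simp [g]; omega⟩ (mem_iInter.1 hbranch _)
  · have hpre : w.take k <+: w := List.take_prefix k w
    exact mem_biUnion ⟨hw.of_isPrefix hpre, by simp; omega⟩
      (M.Icc_subset_Icc_of_isPrefix hpre hw hw_mem)

end MoranConstruction

section Covering

variable {X : Type*} [MetricSpace X] {r R : ℝ}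

theorem coverNum_le_card (s₀ : Finset X) (hs₀ : ∀ z : X, ∃ y ∈ s₀, dist z y ≤ r) :
    coverNum X r R ≤ s₀.card := by
  refine csSup_le' ?_
  rintro _ ⟨x, rfl⟩
  exact Nat.sInf_le ⟨s₀, rfl, fun z _ => mem_iUnion₂.2 <| (hs₀ z).imp fun _ h => ⟨h.1, h.2⟩⟩

theorem le_mul_coverNum (s₀ : Finset X) (hs₀ : ∀ z : X, ∃ y ∈ s₀, dist z y ≤ r) (x : X) {N k : ℕ}
    (hN : ∀ s : Finset X, closedBall x R ⊆ ⋃ y ∈ s, closedBall y r → N ≤ k * s.card) :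
    N ≤ k * coverNum X r R := by
  have hcover : ∀ x : X, closedBall x R ⊆ ⋃ y ∈ s₀, closedBall y r :=
    fun _ z _ => mem_iUnion₂.2 <| (hs₀ z).imp fun _ h => ⟨h.1, h.2⟩
  obtain ⟨s, hs, hcov⟩ := Nat.sInf_mem (s := {m | ∃ s : Finset X, s.card = m ∧
    closedBall x R ⊆ ⋃ y ∈ s, closedBall y r}) ⟨_, s₀, rfl, hcover x⟩
  refine (hN s hcov).trans (Nat.mul_le_mul_left _ (hs ▸ le_csSup ⟨s₀.card, ?_⟩ ⟨x, rfl⟩))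
  rintro _ ⟨x', rfl⟩
  exact Nat.sInf_le ⟨s₀, rfl, hcover x'⟩

theorem card_le_mul_card_of_forall_exists_dist_le {ι : Type*} [DecidableEq ι] {T : Finset ι}
    {z : ι → X} {s : Finset X} {m : ℕ} (hcov : ∀ u ∈ T, ∃ y ∈ s, dist (z u) y ≤ r)
    (hmult : ∀ y, (T.filter fun u => dist (z u) y ≤ r).card ≤ m) : T.card ≤ m * s.card :=
  calc T.card ≤ (s.biUnion fun y => T.filter fun u => dist (z u) y ≤ r).card :=
        Finset.card_le_card fun u hu => by
          obtain ⟨y, hy, hzy⟩ := hcov u hu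
          exact Finset.mem_biUnion.2 ⟨y, hy, Finset.mem_filter.2 ⟨hu, hzy⟩⟩
    _ ≤ ∑ y ∈ s, (T.filter fun u => dist (z u) y ≤ r).card := Finset.card_biUnion_le
    _ ≤ ∑ _y ∈ s, m := Finset.sum_le_sum fun y _ => hmult y
    _ = m * s.card := by rw [Finset.sum_const, smul_eq_mul, mul_comm]

end Covering

theorem exists_finset_forall_dist_le_of_subset_Icc {E : Set ℝ} {A B r : ℝ}
    (hE : E ⊆ Icc A B) (hAB : A ≤ B) (hr : 0 < r) :
    ∃ s : Finset E, (s.card : ℝ) ≤ (B - A) / r + 1 ∧ ∀ z : E, ∃ y ∈ s, dist z y ≤ r := by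
  classical
  rcases isEmpty_or_nonempty E with hE₀ | hE₀
  · exact ⟨∅, by simp; positivity, fun z => isEmptyElim z⟩
  set cell : E → ℤ := fun z => ⌊((z : ℝ) - A) / r⌋
  have hcell : ∀ z, cell z ∈ Finset.Icc 0 ⌊(B - A) / r⌋ := fun z => Finset.mem_Icc.2
    ⟨Int.floor_nonneg.2 (div_nonneg (by linarith [(hE z.2).1]) hr.le),
      Int.floor_mono (div_le_div_of_nonneg_right (by linarith [(hE z.2).2]) hr.le)⟩
  refine ⟨(Finset.Icc 0 ⌊(B - A) / r⌋).image (Function.invFun cell), ?_, fun z => ?_⟩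
  · have hfloor : 0 ≤ ⌊(B - A) / r⌋ := Int.floor_nonneg.2 (div_nonneg (by linarith) hr.le)
    calc ((Finset.Icc 0 ⌊(B - A) / r⌋).image (Function.invFun cell)).card
        ≤ ((Finset.Icc 0 ⌊(B - A) / r⌋).card : ℝ) := by exact_mod_cast Finset.card_image_le
      _ = ⌊(B - A) / r⌋ + 1 := by
        rw [Int.card_Icc, sub_zero, ← Int.cast_natCast, Int.toNat_of_nonneg (by omega)]
        push_cast; ring
      _ ≤ (B - A) / r + 1 := by linarith [Int.floor_le ((B - A) / r)]
  · refine ⟨_, Finset.mem_image_of_mem _ (hcell z), ?_⟩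
    have h := Int.abs_sub_lt_one_of_floor_eq_floor (Function.invFun_eq ⟨z, rfl⟩ : cell _ = cell z)
    rw [← sub_div, abs_div, abs_of_pos hr, div_lt_one hr, sub_sub_sub_cancel_right,
      abs_sub_comm] at h
    exact (Real.dist_eq _ _ ▸ h).le

def CoverNumBound (X : Type*) [MetricSpace X] (δ α b C : ℝ) : Prop :=
  ∀ r R : ℝ, 0 < r → r < r ^ (1 - δ) → r ^ (1 - δ) ≤ R → R < b →
    (coverNum X r R : ℝ) ≤ C * (R / r) ^ α

theorem le_hFun {X : Type*} [MetricSpace X] {δ t α₀ : ℝ} (hα₀ : 0 ≤ α₀)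
    (h₀ : ∃ b C, 0 < b ∧ 0 < C ∧ CoverNumBound X δ α₀ b C)
    (h : ∀ α b C, 0 ≤ α → 0 < b → 0 < C → CoverNumBound X δ α b C → t ≤ α) : t ≤ hFun X δ :=
  le_csInf ⟨α₀, hα₀, h₀⟩ fun α ⟨hα, b, C, hb, hC, hbound⟩ => h α b C hα hb hC hbound

theorem coverNumBound_inv_of_subset_Icc {E : Set ℝ} {A B δ : ℝ} (hE : E ⊆ Icc A B) (hAB : A ≤ B)
    (hδ : 0 < δ) : CoverNumBound E δ (1 / δ) 1 (B - A + 1) := by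
  intro r R hr hrδ hR _
  have hr₁ : r < 1 := by
    by_contra! h
    have := Real.rpow_le_rpow_of_exponent_le h (by linarith : 1 - δ ≤ 1)
    rw [Real.rpow_one] at this
    linarith
  have hinv : 1 / r ≤ (R / r) ^ (1 / δ) := by
    have hrδ' : r ^ (-δ) ≤ R / r := by
      rw [show -δ = (1 - δ) - 1 by ring, Real.rpow_sub hr, Real.rpow_one]
      exact div_le_div_of_nonneg_right hR hr.le
    calc 1 / r = (r ^ (-δ)) ^ (1 / δ) := by
          rw [← Real.rpow_mul hr.le, neg_mul, mul_one_div_cancel hδ.ne', Real.rpow_neg_one, one_div]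
      _ ≤ (R / r) ^ (1 / δ) := Real.rpow_le_rpow (by positivity) hrδ' (by positivity)
  obtain ⟨s, hs, hcover⟩ := exists_finset_forall_dist_le_of_subset_Icc hE hAB hr
  calc (coverNum E r R : ℝ) ≤ s.card := by exact_mod_cast coverNum_le_card s hcover
    _ ≤ (B - A) / r + 1 := hs
    _ ≤ (B - A + 1) * (1 / r) := by
        rw [mul_one_div, add_div]
        linarith [(one_lt_div hr).2 hr₁]
    _ ≤ (B - A + 1) * (R / r) ^ (1 / δ) := mul_le_mul_of_nonneg_left hinv (by linarith)

theorem card_le_four_of_pairwiseDisjoint_Ioo {ι : Type*} {T : Finset ι} {a b : ι → ℝ} {ℓ y : ℝ}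
    (hℓ : 0 < ℓ) (hlen : ∀ u ∈ T, b u - a u = ℓ)
    (hsub : ∀ u ∈ T, Ioo (a u) (b u) ⊆ Icc (y - 2 * ℓ) (y + 2 * ℓ))
    (hdisj : (T : Set ι).PairwiseDisjoint fun u => Ioo (a u) (b u)) : T.card ≤ 4 := by
  open MeasureTheory in
  have hvol : (T.card : ENNReal) * ENNReal.ofReal ℓ ≤ 4 * ENNReal.ofReal ℓ :=
    calc (T.card : ENNReal) * ENNReal.ofReal ℓ = ∑ u ∈ T, volume (Ioo (a u) (b u)) := by
          rw [Finset.sum_congr rfl fun u hu => by rw [Real.volume_Ioo, hlen u hu],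
            Finset.sum_const, nsmul_eq_mul]
      _ = volume (⋃ u ∈ T, Ioo (a u) (b u)) :=
          (measure_biUnion_finset hdisj fun _ _ => measurableSet_Ioo).symm
      _ ≤ volume (Icc (y - 2 * ℓ) (y + 2 * ℓ)) := measure_mono (iUnion₂_subset hsub)
      _ = 4 * ENNReal.ofReal ℓ := by
          rw [Real.volume_Icc, show y + 2 * ℓ - (y - 2 * ℓ) = 4 * ℓ by ring,
            ENNReal.ofReal_mul (by norm_num)]
          norm_num
  exact_mod_cast (ENNReal.mul_le_mul_iff_left (by simpa using hℓ) ENNReal.ofReal_ne_top).1 hvol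

def descendants (n : ℕ → ℕ) (w : List ℕ) : ℕ → Finset (List ℕ)
  | 0 => {w}
  | m + 1 => (descendants n w m).biUnion fun u =>
      (Finset.Icc 1 (n (u.length + 1))).image fun j => u ++ [j]

theorem mem_descendants {n : ℕ → ℕ} {w u : List ℕ} {m : ℕ} (hw : MoranAdmissible n w)
    (hu : u ∈ descendants n w m) :
    w <+: u ∧ u.length = w.length + m ∧ MoranAdmissible n u := by
  induction m generalizing u with
  | zero => obtain rfl := Finset.mem_singleton.1 hu; exact ⟨List.prefix_refl _, rfl, hw⟩
  | succ m ih =>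
    simp only [descendants, Finset.mem_biUnion, Finset.mem_image, Finset.mem_Icc] at hu
    obtain ⟨v, hv, j, hj, rfl⟩ := hu
    obtain ⟨hwv, hlen, hadm⟩ := ih hv
    exact ⟨hwv.trans (List.prefix_append v [j]), by simp [hlen]; omega,
      MoranAdmissible.append_singleton_iff.2 ⟨hadm, hj⟩⟩

theorem card_descendants {n : ℕ → ℕ} {w : List ℕ} (hw : MoranAdmissible n w) (m : ℕ) :
    (descendants n w m).card = ∏ i ∈ Finset.Ioc w.length (w.length + m), n i := by
  induction m with
  | zero => simp [descendants]
  | succ m ih =>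
    have hlen : ∀ u ∈ descendants n w m, u.length = w.length + m :=
      fun u hu => (mem_descendants hw hu).2.1
    rw [descendants, Finset.card_biUnion, ← add_assoc, Finset.prod_Ioc_succ_top (by omega), ← ih,
      ← smul_eq_mul, ← Finset.sum_const]
    · refine Finset.sum_congr rfl fun u hu => ?_
      rw [Finset.card_image_of_injective _ fun j j' h => by simpa using h, Nat.card_Icc, hlen u hu]
      rfl
    · intro u₁ h₁ u₂ h₂ hne
      simp only [Function.onFun, Finset.disjoint_left, Finset.mem_image]
      rintro _ ⟨j, -, rfl⟩ ⟨j', -, heq⟩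
      exact hne (List.append_inj heq.symm (by rw [hlen u₁ h₁, hlen u₂ h₂])).1

namespace MoranConstruction

variable {n : ℕ → ℕ} {c : ℕ → ℝ} (M : MoranConstruction n c)

theorem len_nil_pos : 0 < M.len [] := sub_pos.2 M.left_nil_lt

theorem levelLen_pos (hc : ∀ k, 1 ≤ k → 0 < c k) (k : ℕ) : 0 < M.levelLen k :=
  mul_pos M.len_nil_pos (Finset.prod_pos fun i hi => hc i (Finset.mem_Icc.1 hi).1)

theorem card_filter_dist_point_le_four (hn : ∀ k, 1 ≤ k → 1 ≤ n k) (hc : ∀ k, 1 ≤ k → 0 < c k)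
    {T : Finset (List ℕ)} {q : ℕ} (hT : ∀ u ∈ T, MoranAdmissible n u ∧ u.length = q) (y : ℝ) :
    (T.filter fun u => dist (M.point u) y ≤ M.levelLen q).card ≤ 4 := by
  have hlen : ∀ u ∈ T, M.right u - M.left u = M.levelLen q := fun u hu =>
    (hT u hu).2 ▸ M.len_eq_levelLen (hT u hu).1
  refine card_le_four_of_pairwiseDisjoint_Ioo (y := y) (M.levelLen_pos hc q)
    (fun u hu => hlen u (Finset.mem_filter.1 hu).1) (fun u hu => ?_) fun u₁ hu₁ u₂ hu₂ hne => ?_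
  · obtain ⟨huT, hdist⟩ := Finset.mem_filter.1 hu
    have hpoint := (M.point_mem hn (hT u huT).1).2
    rw [Real.dist_eq, abs_le] at hdist
    exact Ioo_subset_Icc_self.trans
      (Icc_subset_Icc (by linarith [hpoint.2, hlen u huT]) (by linarith [hpoint.1, hlen u huT]))
  · have h₁ := hT u₁ (Finset.mem_filter.1 hu₁).1
    have h₂ := hT u₂ (Finset.mem_filter.1 hu₂).1
    exact M.disjoint_Ioo_of_ne h₁.1 h₂.1 (h₁.2.trans h₂.2.symm) hne

theorem prod_le_four_mul_coverNum (hn : ∀ k, 1 ≤ k → 1 ≤ n k) (hc : ∀ k, 1 ≤ k → 0 < c k)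
    {m q : ℕ} (hmq : m ≤ q) {R : ℝ} (hR : M.levelLen m ≤ R) :
    ∏ i ∈ Finset.Ioc m q, n i ≤ 4 * coverNum M.limitSet (M.levelLen q) R := by
  classical
  set w := List.replicate m 1
  have hw : MoranAdmissible n w := by
    simpa using (MoranAdmissible.nil n).append_replicate_one hn m
  have hwlen : w.length = m := List.length_replicate
  set T := descendants n w (q - m)
  have hT : ∀ u ∈ T, w <+: u ∧ u.length = q ∧ MoranAdmissible n u := fun u hu => by
    obtain ⟨h₁, h₂, h₃⟩ := mem_descendants hw hu
    exact ⟨h₁, by omega, h₃⟩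
  have hcard : T.card = ∏ i ∈ Finset.Ioc m q, n i := by
    rw [card_descendants hw, hwlen, Nat.add_sub_cancel' hmq]
  obtain ⟨s₀, -, hs₀⟩ := exists_finset_forall_dist_le_of_subset_Icc M.limitSet_subset
    M.left_nil_lt.le (M.levelLen_pos hc q)
  have hw_mem := M.point_mem hn hw
  rw [← hcard]
  refine le_mul_coverNum s₀ hs₀ ⟨M.point w, hw_mem.1⟩ fun s hs => ?_
  have hcov : ∀ u ∈ T, ∃ y ∈ s.image Subtype.val, dist (M.point u) y ≤ M.levelLen q := by
    intro u hu
    have hu_mem := M.point_mem hn (hT u hu).2.2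
    have hdist : dist (M.point u) (M.point w) ≤ R := by
      refine (Real.dist_le_of_mem_Icc (M.Icc_subset_Icc_of_isPrefix (hT u hu).1 (hT u hu).2.2
        hu_mem.2) hw_mem.2).trans ?_
      rwa [← len, M.len_eq_levelLen hw, hwlen]
    obtain ⟨y, hy, hzy⟩ := mem_iUnion₂.1 (hs (a := ⟨M.point u, hu_mem.1⟩) hdist)
    exact ⟨y, Finset.mem_image_of_mem _ hy, hzy⟩
  calc T.card ≤ 4 * (s.image Subtype.val).card := card_le_mul_card_of_forall_exists_dist_le hcov
        (M.card_filter_dist_point_le_four hn hc fun u hu => ⟨(hT u hu).2.2, (hT u hu).2.1⟩)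
    _ ≤ 4 * s.card := Nat.mul_le_mul_left _ Finset.card_image_le

end MoranConstruction

/-- `-log (c_{m+1} ⋯ c_q)`, so the paper's `p` is `m + 1` here. -/
noncomputable def negLogProd (c : ℕ → ℝ) (m q : ℕ) : ℝ := ∑ i ∈ Finset.Ioc m q, -Real.log (c i)

section NegLogProd

variable {n : ℕ → ℕ} {c : ℕ → ℝ}

theorem negLogProd_add {m k q : ℕ} (hmk : m ≤ k) (hkq : k ≤ q) :
    negLogProd c m k + negLogProd c k q = negLogProd c m q :=
  Finset.sum_Ioc_consecutive _ hmk hkq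

theorem log_prod_Icc_succ (hc : ∀ k, 1 ≤ k → 0 < c k) (m q : ℕ) :
    Real.log (∏ i ∈ Finset.Icc (m + 1) q, c i) = -negLogProd c m q := by
  rw [Finset.Icc_add_one_left_eq_Ioc, negLogProd, Finset.sum_neg_distrib, neg_neg,
    Real.log_prod fun i hi => (hc i (Nat.one_le_of_lt (Finset.mem_Ioc.1 hi).1)).ne']

theorem prod_Icc_one_eq_exp (hc : ∀ k, 1 ≤ k → 0 < c k) (k : ℕ) :
    ∏ i ∈ Finset.Icc 1 k, c i = Real.exp (-negLogProd c 0 k) := by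
  rw [← log_prod_Icc_succ hc,
    Real.exp_log (Finset.prod_pos fun i hi => hc i (Finset.mem_Icc.1 hi).1)]

theorem log_le_neg_log (hn : ∀ k, 1 ≤ k → 2 ≤ n k)
    (hc : ∀ k, 1 ≤ k → 0 < c k ∧ c k ≤ 1 / (n k : ℝ)) {i : ℕ} (hi : 1 ≤ i) :
    Real.log (n i) ≤ -Real.log (c i) := by
  have hni : (0 : ℝ) < n i := by have := hn i hi; positivity
  have := Real.log_le_log (hc i hi).1 (hc i hi).2
  rw [one_div, Real.log_inv] at this
  linarith

theorem log_two_le_log (hn : ∀ k, 1 ≤ k → 2 ≤ n k) {i : ℕ} (hi : 1 ≤ i) :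
    Real.log 2 ≤ Real.log (n i) :=
  Real.log_le_log two_pos (by exact_mod_cast hn i hi)

theorem sum_log_le_negLogProd (hn : ∀ k, 1 ≤ k → 2 ≤ n k)
    (hc : ∀ k, 1 ≤ k → 0 < c k ∧ c k ≤ 1 / (n k : ℝ)) (m q : ℕ) :
    ∑ i ∈ Finset.Ioc m q, Real.log (n i) ≤ negLogProd c m q :=
  Finset.sum_le_sum fun _ hi => log_le_neg_log hn hc (Nat.one_le_of_lt (Finset.mem_Ioc.1 hi).1)

theorem sum_log_nonneg (hn : ∀ k, 1 ≤ k → 2 ≤ n k) (m q : ℕ) :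
    0 ≤ ∑ i ∈ Finset.Ioc m q, Real.log (n i) :=
  Finset.sum_nonneg fun _ hi => (Real.log_nonneg one_le_two).trans
    (log_two_le_log hn (Nat.one_le_of_lt (Finset.mem_Ioc.1 hi).1))

theorem negLogProd_nonneg (hn : ∀ k, 1 ≤ k → 2 ≤ n k)
    (hc : ∀ k, 1 ≤ k → 0 < c k ∧ c k ≤ 1 / (n k : ℝ)) (m q : ℕ) : 0 ≤ negLogProd c m q :=
  (sum_log_nonneg hn m q).trans (sum_log_le_negLogProd hn hc m q)

theorem negLogProd_mono (hn : ∀ k, 1 ≤ k → 2 ≤ n k)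
    (hc : ∀ k, 1 ≤ k → 0 < c k ∧ c k ≤ 1 / (n k : ℝ)) {m q m' q' : ℕ}
    (h : Finset.Ioc m q ⊆ Finset.Ioc m' q') : negLogProd c m q ≤ negLogProd c m' q' :=
  Finset.sum_le_sum_of_subset_of_nonneg h fun _ hi _ =>
    have hi₁ := Nat.one_le_of_lt (Finset.mem_Ioc.1 hi).1
    (Real.log_nonneg one_le_two).trans ((log_two_le_log hn hi₁).trans (log_le_neg_log hn hc hi₁))

theorem natCast_mul_log_two_le_negLogProd (hn : ∀ k, 1 ≤ k → 2 ≤ n k)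
    (hc : ∀ k, 1 ≤ k → 0 < c k ∧ c k ≤ 1 / (n k : ℝ)) (q : ℕ) :
    q * Real.log 2 ≤ negLogProd c 0 q := by
  have := Finset.card_nsmul_le_sum (Finset.Ioc 0 q) _ _ fun i hi =>
    log_two_le_log hn (Nat.one_le_of_lt (Finset.mem_Ioc.1 hi).1)
  rw [Nat.card_Ioc, nsmul_eq_mul, Nat.sub_zero] at this
  exact this.trans (sum_log_le_negLogProd hn hc 0 q)

theorem tendsto_negLogProd (hn : ∀ k, 1 ≤ k → 2 ≤ n k)
    (hc : ∀ k, 1 ≤ k → 0 < c k ∧ c k ≤ 1 / (n k : ℝ)) :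
    Tendsto (negLogProd c 0) atTop atTop :=
  tendsto_atTop_mono (natCast_mul_log_two_le_negLogProd hn hc)
    (tendsto_natCast_atTop_atTop.atTop_mul_const (Real.log_pos one_lt_two))

theorem spq_succ (hn : ∀ k, 1 ≤ k → 2 ≤ n k) (hc : ∀ k, 1 ≤ k → 0 < c k ∧ c k ≤ 1 / (n k : ℝ))
    (m q : ℕ) : spq n c (m + 1) q = (∑ i ∈ Finset.Ioc m q, Real.log (n i)) / negLogProd c m q := by
  rw [spq, log_prod_Icc_succ (fun k hk => (hc k hk).1), neg_neg, Finset.Icc_add_one_left_eq_Ioc,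
    Real.log_prod fun i hi => by
      have := hn i (Nat.one_le_of_lt (Finset.mem_Ioc.1 hi).1); positivity]

theorem spq_nonneg (hn : ∀ k, 1 ≤ k → 2 ≤ n k) (hc : ∀ k, 1 ≤ k → 0 < c k ∧ c k ≤ 1 / (n k : ℝ))
    {p : ℕ} (hp : 1 ≤ p) (q : ℕ) : 0 ≤ spq n c p q := by
  obtain ⟨m, rfl⟩ : ∃ m, p = m + 1 := ⟨p - 1, by omega⟩
  rw [spq_succ hn hc]
  exact div_nonneg (sum_log_nonneg hn m q) (negLogProd_nonneg hn hc m q)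

theorem lIdx_le (c : ℕ → ℝ) (δ : ℝ) (q : ℕ) : lIdx c δ q ≤ q :=
  csSup_le' fun _ hp => hp.2.1

theorem mul_negLogProd_lt_of_lt_lIdx (hn : ∀ k, 1 ≤ k → 2 ≤ n k)
    (hc : ∀ k, 1 ≤ k → 0 < c k ∧ c k ≤ 1 / (n k : ℝ)) {δ : ℝ} {m q : ℕ}
    (hm : m < lIdx c δ q) : δ * negLogProd c 0 q < negLogProd c m q := by
  have hne : {p : ℕ | 1 ≤ p ∧ p ≤ q ∧ δ < Real.log (∏ i ∈ Finset.Icc p q, c i) /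
      Real.log (∏ i ∈ Finset.Icc 1 q, c i)}.Nonempty := by
    by_contra h
    rw [not_nonempty_iff_eq_empty] at h
    simp [lIdx, h] at hm
  obtain ⟨hl, hlq, hratio⟩ := Nat.sSup_mem hne ⟨q, fun p hp => hp.2.1⟩
  obtain ⟨l, hl'⟩ : ∃ l, lIdx c δ q = l + 1 := ⟨lIdx c δ q - 1, by omega⟩
  have hq : 0 < negLogProd c 0 q := by
    refine lt_of_lt_of_le ?_ (natCast_mul_log_two_le_negLogProd hn hc q)
    have : (0 : ℝ) < q := by exact_mod_cast (show 0 < q by omega)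
    exact mul_pos this (Real.log_pos one_lt_two)
  change δ < Real.log (∏ i ∈ Finset.Icc (lIdx c δ q) q, c i) / _ at hratio
  rw [hl', log_prod_Icc_succ (fun k hk => (hc k hk).1),
    log_prod_Icc_succ (fun k hk => (hc k hk).1) 0, neg_div_neg_eq, lt_div_iff₀ hq] at hratio
  exact hratio.trans_le (negLogProd_mono hn hc (Finset.Ioc_subset_Ioc_left (by omega)))

end NegLogProd

namespace MoranConstruction

variable {n : ℕ → ℕ} {c : ℕ → ℝ} (M : MoranConstruction n c)

theorem log_levelLen (hc : ∀ k, 1 ≤ k → 0 < c k) (k : ℕ) :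
    Real.log (M.levelLen k) = Real.log (M.len []) - negLogProd c 0 k := by
  rw [levelLen, prod_Icc_one_eq_exp hc, Real.log_mul M.len_nil_pos.ne' (Real.exp_pos _).ne',
    Real.log_exp, sub_eq_add_neg]

theorem tendsto_levelLen (hn : ∀ k, 1 ≤ k → 2 ≤ n k)
    (hc : ∀ k, 1 ≤ k → 0 < c k ∧ c k ≤ 1 / (n k : ℝ)) : Tendsto M.levelLen atTop (𝓝 0) := by
  have h := (Real.tendsto_exp_neg_atTop_nhds_zero.comp (tendsto_negLogProd hn hc)).const_mul
    (M.len [])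
  rw [mul_zero] at h
  refine h.congr fun k => ?_
  rw [levelLen, prod_Icc_one_eq_exp fun k hk => (hc k hk).1]
  rfl

theorem levelLen_antitone (hn : ∀ k, 1 ≤ k → 2 ≤ n k)
    (hc : ∀ k, 1 ≤ k → 0 < c k ∧ c k ≤ 1 / (n k : ℝ)) : Antitone M.levelLen := by
  intro k k' h
  have hc₀ : ∀ k, 1 ≤ k → 0 < c k := fun k hk => (hc k hk).1
  rw [← Real.log_le_log_iff (M.levelLen_pos hc₀ k') (M.levelLen_pos hc₀ k), log_levelLen M hc₀,
    log_levelLen M hc₀]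
  linarith [negLogProd_mono hn hc (c := c) (Finset.Ioc_subset_Ioc_right (a := 0) h)]

theorem log_max_div_levelLen_le (hn : ∀ k, 1 ≤ k → 2 ≤ n k)
    (hc : ∀ k, 1 ≤ k → 0 < c k ∧ c k ≤ 1 / (n k : ℝ)) {δ : ℝ} (hδ : δ ∈ Ioo 0 1) {m l q : ℕ}
    (hml : m ≤ l) (hlq : l ≤ q) (hδq : δ * negLogProd c 0 q < negLogProd c m q) :
    Real.log (max (M.levelLen l) (M.levelLen q ^ (1 - δ)) / M.levelLen q)
      ≤ negLogProd c m q + |Real.log (M.len [])| := by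
  have hc₀ : ∀ k, 1 ≤ k → 0 < c k := fun k hk => (hc k hk).1
  have hr := M.levelLen_pos hc₀ q
  have habs := abs_nonneg (Real.log (M.len []))
  rcases max_choice (M.levelLen l) (M.levelLen q ^ (1 - δ)) with hR | hR <;> rw [hR]
  · rw [Real.log_div (M.levelLen_pos hc₀ l).ne' hr.ne', log_levelLen M hc₀, log_levelLen M hc₀,
      ← negLogProd_add (Nat.zero_le l) hlq]
    linarith [negLogProd_mono hn hc (c := c) (Finset.Ioc_subset_Ioc_left (b := q) hml)]
  · rw [Real.log_div (Real.rpow_pos_of_pos hr _).ne' hr.ne', Real.log_rpow hr, log_levelLen M hc₀]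
    nlinarith [neg_abs_le (Real.log (M.len [])), hδ.1, hδ.2]

theorem sum_log_le_of_coverNumBound (hn : ∀ k, 1 ≤ k → 2 ≤ n k)
    (hc : ∀ k, 1 ≤ k → 0 < c k ∧ c k ≤ 1 / (n k : ℝ)) {δ α b C : ℝ} (hδ : δ ∈ Ioo 0 1)
    (hα : 0 ≤ α) (hC : 0 < C) (hbound : CoverNumBound M.limitSet δ α b C) {k m q : ℕ}
    (hk : M.levelLen k < b) (hkq : k ≤ q) (hmq : m ≤ q) (hq₁ : M.levelLen q < 1)
    (hqb : M.levelLen q ^ (1 - δ) < b) (hδq : δ * negLogProd c 0 q < negLogProd c m q) :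
    ∑ i ∈ Finset.Ioc m q, Real.log (n i)
      ≤ Real.log (4 * C) + α * (negLogProd c m q + |Real.log (M.len [])|) + negLogProd c 0 k := by
  have hc₀ : ∀ k, 1 ≤ k → 0 < c k := fun k hk => (hc k hk).1
  set r := M.levelLen q
  set l := max m k
  set R := max (M.levelLen l) (r ^ (1 - δ))
  have hr : 0 < r := M.levelLen_pos hc₀ q
  have hR : 0 < R := lt_max_of_lt_left (M.levelLen_pos hc₀ l)
  have hRb : R < b := max_lt ((M.levelLen_antitone hn hc (le_max_right m k)).trans_lt hk) hqb
  have hcount : ∏ i ∈ Finset.Ioc l q, (n i : ℝ) ≤ 4 * C * (R / r) ^ α := by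
    have hcard := M.prod_le_four_mul_coverNum (fun k hk => one_le_two.trans (hn k hk)) hc₀
      (max_le hmq hkq) (le_max_left (M.levelLen l) (r ^ (1 - δ)))
    have hcover := hbound r R hr (Real.self_lt_rpow_of_lt_one hr hq₁ (by linarith [hδ.1]))
      (le_max_right _ _) hRb
    calc ∏ i ∈ Finset.Ioc l q, (n i : ℝ) ≤ 4 * (coverNum M.limitSet r R : ℝ) := by
          exact_mod_cast hcard
      _ ≤ 4 * C * (R / r) ^ α := by linarith
  have htail : ∑ i ∈ Finset.Ioc l q, Real.log (n i) ≤ Real.log (4 * C) + α * Real.log (R / r) := by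
    rw [← Real.log_prod fun i hi => by
        have := hn i (Nat.one_le_of_lt (Finset.mem_Ioc.1 hi).1); positivity,
      ← Real.log_rpow (div_pos hR hr), ← Real.log_mul (by positivity) (by positivity)]
    exact Real.log_le_log (Finset.prod_pos fun i hi => by
      have := hn i (Nat.one_le_of_lt (Finset.mem_Ioc.1 hi).1); positivity) hcount
  have hhead : ∑ i ∈ Finset.Ioc m l, Real.log (n i) ≤ negLogProd c 0 k :=
    (sum_log_le_negLogProd hn hc m l).trans <| negLogProd_mono hn hc fun i hi => by
      simp only [Finset.mem_Ioc, l] at hi ⊢; omega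
  have hlogR := M.log_max_div_levelLen_le hn hc hδ (le_max_left m k) (max_le hmq hkq) hδq
  rw [← Finset.sum_Ioc_consecutive _ (le_max_left m k) (max_le hmq hkq)]
  nlinarith [mul_le_mul_of_nonneg_left hlogR hα]

theorem eventually_spq_le (hn : ∀ k, 1 ≤ k → 2 ≤ n k)
    (hc : ∀ k, 1 ≤ k → 0 < c k ∧ c k ≤ 1 / (n k : ℝ))
    {δ α b C ε : ℝ} (hδ : δ ∈ Ioo 0 1) (hα : 0 ≤ α) (hb : 0 < b) (hC : 0 < C)
    (hbound : CoverNumBound M.limitSet δ α b C) (hε : 0 < ε) :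
    ∀ᶠ q in atTop, ∀ p, 1 ≤ p → p ≤ lIdx c δ q → spq n c p q ≤ α + ε := by
  have hr := M.tendsto_levelLen hn hc
  obtain ⟨k, hk⟩ := (hr.eventually (gt_mem_nhds hb)).exists
  set K := Real.log (4 * C) + α * |Real.log (M.len [])| + negLogProd c 0 k
  have hrδ : Tendsto (fun q => M.levelLen q ^ (1 - δ)) atTop (𝓝 0) := by
    simpa [Real.zero_rpow (by linarith [hδ.2] : 1 - δ ≠ 0)] using
      hr.rpow_const (p := 1 - δ) (Or.inr (by linarith [hδ.2]))
  filter_upwards [eventually_ge_atTop k, hr.eventually (gt_mem_nhds one_pos),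
    hrδ.eventually (gt_mem_nhds hb),
    ((tendsto_negLogProd hn hc).const_mul_atTop (mul_pos hε hδ.1)).eventually_gt_atTop K]
    with q hkq hq₁ hqb hK p hp hpl
  obtain ⟨m, rfl⟩ : ∃ m, p = m + 1 := ⟨p - 1, by omega⟩
  have hδq := mul_negLogProd_lt_of_lt_lIdx hn hc hpl
  have hsum := M.sum_log_le_of_coverNumBound hn hc hδ hα hC hbound hk hkq
    (by linarith [lIdx_le c δ q]) hq₁ hqb hδq
  have hpos : 0 < negLogProd c m q :=
    lt_of_le_of_lt (mul_nonneg hδ.1.le (negLogProd_nonneg hn hc 0 q)) hδq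
  rw [spq_succ hn hc, div_le_iff₀ hpos]
  nlinarith [mul_le_mul_of_nonneg_left hδq.le hε.le]

end MoranConstruction

theorem hFun_moran_ge_general (J : Set ℝ) (n : ℕ → ℕ) (c : ℕ → ℝ)
    (hn : ∀ k : ℕ, 1 ≤ k → 2 ≤ n k)
    (hc : ∀ k : ℕ, 1 ≤ k → 0 < c k ∧ c k ≤ 1 / (n k : ℝ))
    (E : Set ℝ) (hE : IsMoranSet J n c E) (δ : ℝ) (hδ : δ ∈ Set.Ioo (0 : ℝ) 1) :
    Filter.limsup (fun q : ℕ =>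
        sSup {s : ℝ | ∃ p : ℕ, 1 ≤ p ∧ p ≤ lIdx c δ q ∧ s = spq n c p q}) Filter.atTop
      ≤ hFun E δ := by
  obtain ⟨M, rfl⟩ := hE.exists_moranConstruction
  refine le_hFun (by positivity [hδ.1]) ⟨1, _, one_pos, by linarith [M.left_nil_lt],
    coverNumBound_inv_of_subset_Icc M.limitSet_subset M.left_nil_lt.le hδ.1⟩
    fun α b C hα hb hC hbound => le_of_forall_pos_le_add fun ε hε => ?_
  refine limsup_le_of_le (isCoboundedUnder_le_of_eventually_le _ (x := 0)
    (Eventually.of_forall fun q => Real.sSup_nonneg ?_)) ?_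
  · rintro _ ⟨p, hp, -, rfl⟩
    exact spq_nonneg hn hc hp q
  · filter_upwards [M.eventually_spq_le hn hc hδ hα hb hC hbound hε] with q hq
    exact Real.sSup_le (fun _ ⟨p, hp, hpl, hs⟩ => hs ▸ hq p hp hpl) (by linarith)

/-- Lower bound: if `E ∈ M(J, {n_k}, {c_k})` with `log c_k / log (c_1 ⋯ c_k) → 0`, then
for every `δ ∈ (0,1)`,
`h_E(δ) ≥ limsup_{q→∞} max_{1 ≤ p ≤ l_{q,δ}} log (n_p ⋯ n_q) / (- log (c_p ⋯ c_q))`. -/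
theorem hFun_moran_ge (J : Set ℝ) (n : ℕ → ℕ) (c : ℕ → ℝ)
    (hn : ∀ k : ℕ, 1 ≤ k → 2 ≤ n k)
    (hc : ∀ k : ℕ, 1 ≤ k → 0 < c k ∧ c k ≤ 1 / (n k : ℝ))
    (hlim : Filter.Tendsto
      (fun k : ℕ => Real.log (c k) / Real.log (∏ i ∈ Finset.Icc 1 k, c i))
      Filter.atTop (𝓝 0))
    (E : Set ℝ) (hE : IsMoranSet J n c E) (δ : ℝ) (hδ : δ ∈ Set.Ioo (0 : ℝ) 1) :
    Filter.limsup (fun q : ℕ =>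
        sSup {s : ℝ | ∃ p : ℕ, 1 ≤ p ∧ p ≤ lIdx c δ q ∧ s = spq n c p q}) Filter.atTop
      ≤ hFun E δ :=
  hFun_moran_ge_general J n c hn hc E hE δ hδ
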